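/- Let f : ℝ^n → ℝ be differentiable with smoothness matrix M ≻ 0 and strong convexity matrix G ≻ 0. Let Ŝ be a proper nonvacuous random subset of [n] with inclusion probabilities p, and let v ∈ ℝ^n_{++} satisfy E[M_Ŝ] ⪯ D(p)D(v). For fixed x define x⁺ = x − I_Ŝ D(v)^{-1} ∇f(x). Then E[f(x⁺)] − f(x*) ≤ (1 − σ₃)(f(x) − f(x*)) where σ₃ = λ_min(G^{1/2} D(p) D(v)^{-1} G^{1/2}). -/

import Mathlib

open Matrix BigOperators Finset

noncomputable section

/-- The diagonal 0/1 projection matrix `I_S`. -/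
def projMat (n : ℕ) (S : Finset (Fin n)) : Matrix (Fin n) (Fin n) ℝ :=
  Matrix.diagonal (fun i => if i ∈ S then (1 : ℝ) else 0)

/-- `M_S = I_S M I_S`. -/
def restr {n : ℕ} (M : Matrix (Fin n) (Fin n) ℝ) (S : Finset (Fin n)) :
    Matrix (Fin n) (Fin n) ℝ :=
  projMat n S * M * projMat n S

/-- Expectation of a matrix-valued function of the random set. -/
def mExp {n : ℕ} (P : Finset (Fin n) → ℝ)
    (f : Finset (Fin n) → Matrix (Fin n) (Fin n) ℝ) : Matrix (Fin n) (Fin n) ℝ :=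
  ∑ S : Finset (Fin n), P S • f S

/-- Inclusion probability `p_i = Prob(i ∈ Ŝ)`. -/
def prob {n : ℕ} (P : Finset (Fin n) → ℝ) (i : Fin n) : ℝ :=
  ∑ S : Finset (Fin n), if i ∈ S then P S else 0

/-- `P` is a probability distribution over subsets of `[n]`. -/
def IsSampling {n : ℕ} (P : Finset (Fin n) → ℝ) : Prop :=
  (∀ S, 0 ≤ P S) ∧ ∑ S : Finset (Fin n), P S = 1

/-- Smallest real eigenvalue. -/
def lamMin {n : ℕ} (A : Matrix (Fin n) (Fin n) ℝ) : ℝ :=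
  sInf {r : ℝ | ∃ x : Fin n → ℝ, x ≠ 0 ∧ A.mulVec x = r • x}

/-- Largest real eigenvalue. -/
def lamMax {n : ℕ} (A : Matrix (Fin n) (Fin n) ℝ) : ℝ :=
  sSup {r : ℝ | ∃ x : Fin n → ℝ, x ≠ 0 ∧ A.mulVec x = r • x}

/-- The positive semidefinite square root (the old `Matrix.PosSemidef.sqrt`). -/
def psdSqrt {n : ℕ} {A : Matrix (Fin n) (Fin n) ℝ} (hA : A.PosSemidef) : Matrix (Fin n) (Fin n) ℝ :=
  hA.1.eigenvectorUnitary.1 * Matrix.diagonal (Real.sqrt ∘ hA.1.eigenvalues) *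
    (star hA.1.eigenvectorUnitary : Matrix (Fin n) (Fin n) ℝ)

lemma psdSqrt_isHermitian {n : ℕ} {A : Matrix (Fin n) (Fin n) ℝ} (hA : A.PosSemidef) :
    (psdSqrt hA).IsHermitian := by
  simp only [psdSqrt, Matrix.IsHermitian, Matrix.conjTranspose_mul,
    Matrix.star_eq_conjTranspose, Matrix.conjTranspose_conjTranspose,
    Matrix.diagonal_conjTranspose, star_trivial, Matrix.mul_assoc]

lemma psdSqrt_mul_self {n : ℕ} {A : Matrix (Fin n) (Fin n) ℝ} (hA : A.PosSemidef) :
    psdSqrt hA * psdSqrt hA = A := by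
  classical
  have hs := hA.1.spectral_theorem
  rw [Unitary.conjStarAlgAut_apply] at hs
  have hD : Matrix.diagonal (Real.sqrt ∘ hA.1.eigenvalues) * Matrix.diagonal (Real.sqrt ∘ hA.1.eigenvalues)
      = Matrix.diagonal (RCLike.ofReal ∘ hA.1.eigenvalues) := by
    rw [Matrix.diagonal_mul_diagonal]
    congr 1
    funext i
    simp [Real.mul_self_sqrt (hA.eigenvalues_nonneg i)]
  have hU : (star hA.1.eigenvectorUnitary : Matrix (Fin n) (Fin n) ℝ) * hA.1.eigenvectorUnitary.1 = 1 :=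
    Unitary.coe_star_mul_self _
  conv_rhs => rw [hs]
  simp only [psdSqrt, Matrix.mul_assoc]
  rw [← Matrix.mul_assoc (star hA.1.eigenvectorUnitary : Matrix (Fin n) (Fin n) ℝ), hU, Matrix.one_mul,
    ← Matrix.mul_assoc (Matrix.diagonal _), hD]

lemma psd_sub_min {n : ℕ} {A : Matrix (Fin n) (Fin n) ℝ} (hA : A.IsHermitian)
    {c : ℝ} (hc : ∀ i, c ≤ hA.eigenvalues i) :
    (A - c • (1 : Matrix (Fin n) (Fin n) ℝ)).PosSemidef := by
  classical
  set U : Matrix (Fin n) (Fin n) ℝ := (hA.eigenvectorUnitary : Matrix (Fin n) (Fin n) ℝ)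
  have hUU : U * star U = 1 := (Matrix.mem_unitaryGroup_iff).mp hA.eigenvectorUnitary.2
  have hdecomp : A - c • (1 : Matrix (Fin n) (Fin n) ℝ)
      = U * Matrix.diagonal (fun i => hA.eigenvalues i - c) * Uᴴ := by
    have h1 : A = U * Matrix.diagonal (RCLike.ofReal ∘ hA.eigenvalues) * star U :=
      by have := hA.spectral_theorem; rwa [Unitary.conjStarAlgAut_apply] at this
    have h2 : c • (1 : Matrix (Fin n) (Fin n) ℝ) = U * (c • 1) * star U := by
      rw [Matrix.mul_smul, mul_one, Matrix.smul_mul, hUU]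
    have h3 : Matrix.diagonal (fun i => hA.eigenvalues i - c)
        = Matrix.diagonal (RCLike.ofReal ∘ hA.eigenvalues) - c • (1 : Matrix (Fin n) (Fin n) ℝ) := by
      ext i j
      by_cases h : i = j <;> simp [Matrix.diagonal, h, Matrix.one_apply]
    rw [Matrix.star_eq_conjTranspose U] at h1 h2
    rw [h3, Matrix.mul_sub, Matrix.sub_mul, ← h1, ← h2]
  rw [hdecomp]
  exact (Matrix.posSemidef_diagonal_iff.mpr fun i =>
    sub_nonneg.mpr (hc i)).mul_mul_conjTranspose_same U

lemma lamMin_spec {n : ℕ} [NeZero n] {A : Matrix (Fin n) (Fin n) ℝ} (hA : A.IsHermitian) :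
    (∃ j, lamMin A = hA.eigenvalues j) ∧
      ∀ u : Fin n → ℝ, lamMin A * (u ⬝ᵥ u) ≤ u ⬝ᵥ A *ᵥ u := by
  classical
  obtain ⟨j, hj⟩ := Finite.exists_min hA.eigenvalues
  set c := hA.eigenvalues j with hc
  have hpsd := psd_sub_min hA hj
  have hquad : ∀ u : Fin n → ℝ, c * (u ⬝ᵥ u) ≤ u ⬝ᵥ A *ᵥ u := by
    intro u
    have h0 := hpsd.dotProduct_mulVec_nonneg u
    simp only [star_trivial, Matrix.sub_mulVec, dotProduct_sub,
      Matrix.smul_mulVec, Matrix.one_mulVec, dotProduct_smul,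
      smul_eq_mul] at h0
    linarith
  have hmem : c ∈ {r : ℝ | ∃ x : Fin n → ℝ, x ≠ 0 ∧ A.mulVec x = r • x} :=
    ⟨_, fun h => hA.eigenvectorBasis.orthonormal.ne_zero j (WithLp.ofLp_injective 2 (h.trans (WithLp.ofLp_zero 2).symm)), hA.mulVec_eigenvectorBasis j⟩
  have hlb : ∀ r ∈ {r : ℝ | ∃ x : Fin n → ℝ, x ≠ 0 ∧ A.mulVec x = r • x}, c ≤ r := by
    rintro r ⟨x, hx, hr⟩
    have h0 := hquad x
    rw [hr, dotProduct_smul, smul_eq_mul] at h0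
    have hxx : 0 < x ⬝ᵥ x := by
      rcases (Finset.sum_nonneg fun i _ => mul_self_nonneg (x i)).lt_or_eq with h | h
      · exact h
      · exact absurd (dotProduct_self_eq_zero.mp h.symm) hx
    exact (mul_le_mul_iff_of_pos_right hxx).mp h0
  have heq : lamMin A = c :=
    le_antisymm (csInf_le ⟨c, hlb⟩ hmem) (le_csInf ⟨c, hmem⟩ hlb)
  exact ⟨⟨j, heq⟩, fun u => heq ▸ hquad u⟩

lemma symdot {n : ℕ} {H : Matrix (Fin n) (Fin n) ℝ} (hH : H.IsHermitian) (a b : Fin n → ℝ) :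
    (H *ᵥ a) ⬝ᵥ b = a ⬝ᵥ (H *ᵥ b) := by
  have hsym : ∀ i j, H i j = H j i := fun i j => by
    conv_lhs => rw [← hH.eq]
    simp [Matrix.conjTranspose_apply]
  simp only [Matrix.mulVec, dotProduct, Finset.sum_mul, Finset.mul_sum]
  rw [Finset.sum_comm]
  refine Finset.sum_congr rfl fun j _ => Finset.sum_congr rfl fun i _ => ?_
  rw [hsym j i]; ring

theorem stmt_6 {n : ℕ} (f : (Fin n → ℝ) → ℝ) (g : (Fin n → ℝ) → Fin n → ℝ)
    (hdiff : Differentiable ℝ f)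
    (hgrad : ∀ x h : Fin n → ℝ, fderiv ℝ f x h = g x ⬝ᵥ h)
    (M G : Matrix (Fin n) (Fin n) ℝ) (hM : M.PosDef) (hG : G.PosDef)
    (hsmooth : ∀ x h : Fin n → ℝ,
      f (x + h) ≤ f x + g x ⬝ᵥ h + (1/2) * (M.mulVec h ⬝ᵥ h))
    (hsc : ∀ x h : Fin n → ℝ,
      f x + g x ⬝ᵥ h + (1/2) * (G.mulVec h ⬝ᵥ h) ≤ f (x + h))
    (P : Finset (Fin n) → ℝ) (hP : IsSampling P)
    (hproper : ∀ i : Fin n, 0 < prob P i) (hnonvac : P ∅ = 0)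
    (v : Fin n → ℝ) (hv : ∀ i, 0 < v i)
    (hESO : (Matrix.diagonal (prob P) * Matrix.diagonal v - mExp P (restr M)).PosSemidef)
    (xs : Fin n → ℝ) (hxs : ∀ y, f xs ≤ f y) (x : Fin n → ℝ) :
    (∑ S : Finset (Fin n), P S * f (x - (projMat n S).mulVec
        ((Matrix.diagonal v)⁻¹.mulVec (g x)))) - f xs ≤
      (1 - lamMin (psdSqrt hG.posSemidef * Matrix.diagonal (prob P) * (Matrix.diagonal v)⁻¹ *
        psdSqrt hG.posSemidef)) * (f x - f xs) := by
  classical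
  -- n ≠ 0
  have hn : n ≠ 0 := by
    rintro rfl
    have h2 := hP.2
    have hall : ∀ S : Finset (Fin 0), S = ∅ :=
      fun S => Finset.eq_empty_of_forall_notMem fun i _ => i.elim0
    have hz : ∑ S : Finset (Fin 0), P S = 0 :=
      Finset.sum_eq_zero fun S _ => by rw [hall S]; exact hnonvac
    rw [hz] at h2
    exact one_ne_zero h2.symm
  haveI : NeZero n := ⟨hn⟩
  set g0 := g x with hg0
  set Dv := Matrix.diagonal v with hDv
  have hDvinv : Dv⁻¹ = Matrix.diagonal (fun i => (v i)⁻¹) := by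
    apply Matrix.inv_eq_right_inv
    rw [hDv, Matrix.diagonal_mul_diagonal]
    have : (fun i => v i * (v i)⁻¹) = fun _ => (1 : ℝ) :=
      funext fun i => mul_inv_cancel₀ (hv i).ne'
    rw [this, Matrix.diagonal_one]
  set u' := Dv⁻¹ *ᵥ g0 with hu'
  have hu'i : ∀ i, u' i = (v i)⁻¹ * g0 i := by
    intro i
    rw [hu', hDvinv, Matrix.mulVec_diagonal]
  set p := prob P with hp
  set K := ∑ i : Fin n, p i * (g0 i * u' i) with hK
  -- Step A3: expectation of linear term
  have hT1 : ∑ S : Finset (Fin n), P S * (g0 ⬝ᵥ ((projMat n S) *ᵥ u')) = K := by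
    have : ∀ S : Finset (Fin n),
        P S * (g0 ⬝ᵥ ((projMat n S) *ᵥ u'))
          = ∑ i : Fin n, (if i ∈ S then P S else 0) * (g0 i * u' i) := by
      intro S
      rw [dotProduct, Finset.mul_sum]
      refine Finset.sum_congr rfl fun i _ => ?_
      rw [projMat, Matrix.mulVec_diagonal]
      by_cases h : i ∈ S <;> simp [h] <;> try ring
    rw [Finset.sum_congr rfl fun S _ => this S, Finset.sum_comm, hK]
    refine Finset.sum_congr rfl fun i _ => ?_
    rw [hp, prob, ← Finset.sum_mul]
  -- Step A4 preparation : quadratic term identity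
  have hq_id : ∀ S : Finset (Fin n),
      (M *ᵥ ((projMat n S) *ᵥ u')) ⬝ᵥ ((projMat n S) *ᵥ u')
        = u' ⬝ᵥ ((restr M S) *ᵥ u') := by
    intro S
    have hproj : (projMat n S).IsHermitian := by
      rw [projMat, Matrix.IsHermitian, Matrix.diagonal_conjTranspose]
      congr 1
    rw [dotProduct_comm, restr]
    rw [show projMat n S * M * projMat n S = projMat n S * (M * projMat n S) from mul_assoc _ _ _]
    rw [← Matrix.mulVec_mulVec, ← Matrix.mulVec_mulVec]
    rw [← symdot hproj]
  -- Step A4: expectation of quadratic term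
  have hT2 : ∑ S : Finset (Fin n), P S * ((M *ᵥ ((projMat n S) *ᵥ u')) ⬝ᵥ ((projMat n S) *ᵥ u')) ≤ K := by
    have hlin : (mExp P (restr M)) *ᵥ u' = ∑ S : Finset (Fin n), P S • ((restr M S) *ᵥ u') := by
      rw [mExp]
      rw [show (∑ S : Finset (Fin n), P S • restr M S) *ᵥ u'
          = (Matrix.mulVec.addMonoidHomLeft u') (∑ S : Finset (Fin n), P S • restr M S) from rfl,
        map_sum]
      exact Finset.sum_congr rfl fun S _ =>
        show (P S • restr M S) *ᵥ u' = P S • (restr M S *ᵥ u') from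
          Matrix.smul_mulVec _ _ _
    have h1 : ∑ S : Finset (Fin n), P S * ((M *ᵥ ((projMat n S) *ᵥ u')) ⬝ᵥ ((projMat n S) *ᵥ u'))
        = u' ⬝ᵥ ((mExp P (restr M)) *ᵥ u') := by
      have hdps : u' ⬝ᵥ (∑ S : Finset (Fin n), P S • ((restr M S) *ᵥ u'))
          = ∑ S : Finset (Fin n), P S * (u' ⬝ᵥ ((restr M S) *ᵥ u')) := by
        simp only [dotProduct, Finset.sum_apply, Pi.smul_apply, smul_eq_mul,
          Finset.mul_sum]
        rw [Finset.sum_comm]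
        exact Finset.sum_congr rfl fun S _ => Finset.sum_congr rfl fun i _ => by ring
      rw [hlin, hdps]
      exact Finset.sum_congr rfl fun S _ => by rw [hq_id S]
    have h2 : u' ⬝ᵥ ((mExp P (restr M)) *ᵥ u')
        ≤ u' ⬝ᵥ ((Matrix.diagonal p * Dv) *ᵥ u') := by
      have h0 := hESO.dotProduct_mulVec_nonneg u'
      simp only [star_trivial, Matrix.sub_mulVec, dotProduct_sub] at h0
      linarith
    have h3 : u' ⬝ᵥ ((Matrix.diagonal p * Dv) *ᵥ u') = K := by
      rw [hDv, Matrix.diagonal_mul_diagonal, dotProduct, hK]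
      refine Finset.sum_congr rfl fun i _ => ?_
      rw [Matrix.mulVec_diagonal, hu'i i]
      have hvi : v i ≠ 0 := (hv i).ne'
      field_simp
    rw [h1]; rw [h3] at h2; exact h2
  -- Step A: expectation bound
  have hEbound : ∑ S : Finset (Fin n), P S * f (x - (projMat n S) *ᵥ u') ≤ f x - K / 2 := by
    have hper : ∀ S : Finset (Fin n),
        f (x - (projMat n S) *ᵥ u') ≤ f x - g0 ⬝ᵥ ((projMat n S) *ᵥ u')
          + (1/2) * ((M *ᵥ ((projMat n S) *ᵥ u')) ⬝ᵥ ((projMat n S) *ᵥ u')) := by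
      intro S
      have := hsmooth x (-((projMat n S) *ᵥ u'))
      rw [← sub_eq_add_neg] at this
      simpa [Matrix.mulVec_neg, dotProduct_neg, neg_dotProduct,
        sub_eq_add_neg] using this
    calc ∑ S : Finset (Fin n), P S * f (x - (projMat n S) *ᵥ u')
        ≤ ∑ S : Finset (Fin n), P S * (f x - g0 ⬝ᵥ ((projMat n S) *ᵥ u')
            + (1/2) * ((M *ᵥ ((projMat n S) *ᵥ u')) ⬝ᵥ ((projMat n S) *ᵥ u'))) :=
          Finset.sum_le_sum fun S _ => mul_le_mul_of_nonneg_left (hper S) (hP.1 S)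
      _ = (∑ S : Finset (Fin n), P S) * f x
            - ∑ S : Finset (Fin n), P S * (g0 ⬝ᵥ ((projMat n S) *ᵥ u'))
            + (1/2) * ∑ S : Finset (Fin n), P S * ((M *ᵥ ((projMat n S) *ᵥ u')) ⬝ᵥ ((projMat n S) *ᵥ u')) := by
          rw [Finset.sum_mul, Finset.mul_sum, ← Finset.sum_sub_distrib, ← Finset.sum_add_distrib]
          exact Finset.sum_congr rfl fun S _ => by ring
      _ ≤ f x - K + (1/2) * K := by
          rw [hP.2, hT1, one_mul]
          have := hT2
          nlinarith
      _ = f x - K / 2 := by ring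
  -- Step B : strong convexity bound
  set w := G⁻¹ *ᵥ g0 with hw
  have hGdet : IsUnit G.det := hG.det_pos.ne'.isUnit
  have hGw : G *ᵥ w = g0 := by
    rw [hw, Matrix.mulVec_mulVec, Matrix.mul_nonsing_inv G hGdet, Matrix.one_mulVec]
  have hquadmin : ∀ h : Fin n → ℝ,
      -(1/2) * (g0 ⬝ᵥ w) ≤ g0 ⬝ᵥ h + (1/2) * ((G *ᵥ h) ⬝ᵥ h) := by
    intro h
    have h0 := hG.posSemidef.dotProduct_mulVec_nonneg (h + w)
    rw [star_trivial] at h0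
    have hexp : (h + w) ⬝ᵥ (G *ᵥ (h + w))
        = (G *ᵥ h) ⬝ᵥ h + 2 * (g0 ⬝ᵥ h) + g0 ⬝ᵥ w := by
      rw [Matrix.mulVec_add, dotProduct_add, add_dotProduct,
        add_dotProduct, hGw]
      have e1 : h ⬝ᵥ (G *ᵥ h) = (G *ᵥ h) ⬝ᵥ h := dotProduct_comm _ _
      have e2 : h ⬝ᵥ g0 = g0 ⬝ᵥ h := dotProduct_comm _ _
      have e3 : w ⬝ᵥ (G *ᵥ h) = g0 ⬝ᵥ h := by
        rw [← symdot hG.isHermitian w h, hGw]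
      have e4 : w ⬝ᵥ g0 = g0 ⬝ᵥ w := dotProduct_comm _ _
      rw [e1, e2, e3, e4]; ring
    rw [hexp] at h0
    linarith
  have hB : f x - f xs ≤ (1/2) * (g0 ⬝ᵥ w) := by
    have h1 := hsc x (xs - x)
    rw [add_sub_cancel] at h1
    have h2 := hquadmin (xs - x)
    rw [← hg0] at h1
    linarith
  -- Step C : eigenvalue bound
  set Q := psdSqrt hG.posSemidef with hQ
  have hQH : Qᴴ = Q := psdSqrt_isHermitian hG.posSemidef
  have hQQ : Q * Q = G := psdSqrt_mul_self hG.posSemidef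
  have hQdet : IsUnit Q.det := by
    have : Q.det * Q.det = G.det := by rw [← Matrix.det_mul, hQQ]
    rcases mul_ne_zero_iff.mp (this ▸ hG.det_pos.ne') with ⟨h, _⟩
    exact h.isUnit
  have hQQinv : Q * Q⁻¹ = 1 := Matrix.mul_nonsing_inv Q hQdet
  have hQinvH : (Q⁻¹).IsHermitian := by
    rw [Matrix.IsHermitian, Matrix.conjTranspose_nonsing_inv, hQH]
  set Wd := Matrix.diagonal (fun i => p i * (v i)⁻¹) with hWd
  have hWdH : Wd.IsHermitian := by
    rw [hWd, Matrix.IsHermitian, Matrix.diagonal_conjTranspose]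
    congr 1
  set A := Q * Matrix.diagonal p * Dv⁻¹ * Q with hA
  have hAeq : A = Q * Wd * Q := by
    rw [hA, hDvinv, hWd, mul_assoc Q, Matrix.diagonal_mul_diagonal]
  have hApsd : A.PosSemidef := by
    rw [hAeq]
    have hWdpsd : Wd.PosSemidef := by
      rw [hWd]
      exact Matrix.posSemidef_diagonal_iff.mpr fun i =>
        mul_nonneg (hproper i).le (inv_nonneg.mpr (hv i).le)
    have := hWdpsd.mul_mul_conjTranspose_same Q
    rwa [hQH] at this
  obtain ⟨hex, hbound⟩ := lamMin_spec hApsd.1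
  set σ := lamMin A with hσ
  have hσ0 : 0 ≤ σ := by
    obtain ⟨j, hj⟩ := hex
    rw [hj]
    exact hApsd.eigenvalues_nonneg j
  have hC : σ * (g0 ⬝ᵥ w) ≤ K := by
    set y := Q⁻¹ *ᵥ g0 with hy
    have h1 := hbound y
    have hQy : Q *ᵥ y = g0 := by
      rw [hy, Matrix.mulVec_mulVec, hQQinv, Matrix.one_mulVec]
    have hAy : y ⬝ᵥ (A *ᵥ y) = K := by
      have e1 : A *ᵥ y = Q *ᵥ (Wd *ᵥ g0) := by
        rw [hAeq, ← Matrix.mulVec_mulVec, ← Matrix.mulVec_mulVec, hQy]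
      have e2 : y ⬝ᵥ (A *ᵥ y) = (Q *ᵥ y) ⬝ᵥ (Wd *ᵥ g0) := by
        rw [e1, ← symdot (psdSqrt_isHermitian hG.posSemidef) y (Wd *ᵥ g0)]
      rw [e2, hQy, hWd, dotProduct, hK]
      refine Finset.sum_congr rfl fun i _ => ?_
      rw [Matrix.mulVec_diagonal, hu'i i]
      ring
    have hyy : y ⬝ᵥ y = g0 ⬝ᵥ w := by
      have e1 : y ⬝ᵥ y = g0 ⬝ᵥ (Q⁻¹ *ᵥ (Q⁻¹ *ᵥ g0)) := by
        rw [hy, symdot hQinvH g0 (Q⁻¹ *ᵥ g0)]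
      have e2 : Q⁻¹ *ᵥ (Q⁻¹ *ᵥ g0) = w := by
        rw [Matrix.mulVec_mulVec, hw, ← Matrix.mul_inv_rev, hQQ]
      rw [e1, e2]
    rw [hAy, hyy] at h1
    exact h1
  -- Final assembly
  have hfinal : σ * (f x - f xs) ≤ K / 2 := by
    nlinarith [mul_le_mul_of_nonneg_left hB hσ0]
  have hmain := hEbound
  have hfs : f xs ≤ f x := hxs x
  nlinarith
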